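/- arXiv:1901.00307 — 3 statements merged into one kernel-verified Lean document; each statement's English description precedes it below -/
import Mathlib

section
/- Let $A : \mathbb{R} \to \mathbb{R}^{m\times m}$ be continuous and let $\Phi_t$ be the fundamental matrix solution of $\dot\Phi_t = A_t\Phi_t$, $\Phi_0 = I$. Let $P \in \mathbb{R}^{m\times m}$ be symmetric positive semi-definite and define $\bar C_t := \int_0^t \Phi_s^T C_s^T R_s^{-1} C_s \Phi_s\,ds$ where $C_s, R_s$ are continuous with $R_s$ symmetric positive definite. Then $P_t := \Phi_t \sqrt{P}\,(I + \sqrt{P}\,\bar C_t\,\sqrt{P})^{-1}\sqrt{P}\,\Phi_t^T$ solves the noise-free Riccati equation $\dot P_t = A_t P_t + P_t A_t^T - P_t C_t^T R_t^{-1} C_t P_t$ with $P_0 = P$. -/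
open Matrix MeasureTheory intervalIntegral
open scoped Matrix.Norms.L2Operator

open scoped ComplexOrder in
/-- The positive semidefinite square root (removed from Mathlib; old definition restored). -/
noncomputable def Matrix.PosSemidef.sqrt {n : Type*} [Fintype n] [DecidableEq n] {R : Type*} [RCLike R]
    {A : Matrix n n R} (hA : A.PosSemidef) : Matrix n n R :=
  hA.1.eigenvectorUnitary.1 * diagonal ((↑) ∘ Real.sqrt ∘ hA.1.eigenvalues) *
  (star hA.1.eigenvectorUnitary : Matrix n n R)

/-! Write `N_t = (1 + √P C̄_t √P)⁻¹`. By the fundamental theorem of calculus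
`C̄'_t = Φ_tᵀ Cᵀ R⁻¹ C Φ_t`, and differentiating the inverse gives `N' = -N √P C̄' √P N`, so the
product rule yields `Ṗ = A P + P Aᵀ - (Φ √P N √P Φᵀ) Cᵀ R⁻¹ C (Φ √P N √P Φᵀ)`, which is the
Riccati equation. The inverse exists since `C̄_t`, an integral of positive semidefinite matrices
over `[0, t]`, is positive semidefinite, hence so is `√P C̄_t √P`. -/

open scoped ComplexOrder

namespace Matrix

variable {ι : Type*} [Fintype ι] [DecidableEq ι]

namespace PosSemidef

variable {𝕜 : Type*} [RCLike 𝕜] {P : Matrix ι ι 𝕜}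

lemma sqrt_mul_self (hP : P.PosSemidef) : hP.sqrt * hP.sqrt = P := by
  have hP' := hP.1.spectral_theorem
  rw [Unitary.conjStarAlgAut_apply] at hP'
  conv_rhs => rw [hP']
  simp only [sqrt]
  set U := hP.1.eigenvectorUnitary
  have hU : star U.1 * U = 1 := Unitary.star_mul_self_of_mem U.2
  calc _ = U.1 * (diagonal ((↑) ∘ Real.sqrt ∘ hP.1.eigenvalues) * (star U.1 * U.1) *
        diagonal ((↑) ∘ Real.sqrt ∘ hP.1.eigenvalues)) * star U.1 := by
          simp only [Matrix.mul_assoc]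
    _ = _ := by
      rw [hU, Matrix.mul_one, diagonal_mul_diagonal]
      congr 3
      funext i
      simp [← RCLike.ofReal_mul, Real.mul_self_sqrt (hP.eigenvalues_nonneg i)]

lemma conjTranspose_sqrt (hP : P.PosSemidef) : hP.sqrtᴴ = hP.sqrt := by
  rw [sqrt, conjTranspose_mul, conjTranspose_mul, diagonal_conjTranspose,
    star_eq_conjTranspose, conjTranspose_conjTranspose, Matrix.mul_assoc]
  congr 3
  funext i
  simp

lemma isUnit_one_add (hP : P.PosSemidef) : IsUnit (1 + P) :=
  (PosDef.one.add_posSemidef hP).isUnit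

end PosSemidef

lemma posSemidef_integral {X : Type*} [MeasurableSpace X] {μ : Measure X} {f : X → Matrix ι ι ℝ}
    (hf : Integrable f μ) (hpos : ∀ x, (f x).PosSemidef) : (∫ x, f x ∂μ).PosSemidef := by
  refine .of_dotProduct_mulVec_nonneg ?_ fun v => ?_
  · let transposeCLE := (transposeLinearEquiv ι ι ℝ ℝ).toContinuousLinearEquiv
    have : (∫ x, f x ∂μ)ᵀ = ∫ x, (f x)ᵀ ∂μ := (transposeCLE.integral_comp_comm f).symm
    rw [IsHermitian, conjTranspose_eq_transpose_of_trivial, this]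
    exact integral_congr_ae (ae_of_all _ fun x => (hpos x).isHermitian.eq)
  · let quadraticForm : Matrix ι ι ℝ →L[ℝ] ℝ := LinearMap.toContinuousLinearMap
      { toFun M := star v ⬝ᵥ M *ᵥ v
        map_add' M N := by simp [add_mulVec, dotProduct_add]
        map_smul' c M := by simp [smul_mulVec, dotProduct_smul] }
    calc 0 ≤ ∫ x, star v ⬝ᵥ f x *ᵥ v ∂μ :=
          integral_nonneg fun x => (hpos x).dotProduct_mulVec_nonneg v
      _ = star v ⬝ᵥ (∫ x, f x ∂μ) *ᵥ v := quadraticForm.integral_comp_comm hf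

lemma posSemidef_intervalIntegral {f : ℝ → Matrix ι ι ℝ} (hf : Continuous f)
    (hpos : ∀ s, (f s).PosSemidef) {t : ℝ} (ht : 0 ≤ t) :
    (∫ s in (0:ℝ)..t, f s).PosSemidef := by
  rw [intervalIntegral.integral_of_le ht]
  exact posSemidef_integral hf.integrableOn_Ioc hpos

end Matrix

section Calculus

variable {ι : Type*} [Fintype ι] [DecidableEq ι]

lemma Continuous.matrix_inv {X : Type*} [TopologicalSpace X] {M : X → Matrix ι ι ℝ}
    (hM : Continuous M) (hunit : ∀ x, IsUnit (M x)) : Continuous fun x => (M x)⁻¹ :=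
  continuous_iff_continuousAt.2 fun x =>
    (continuousAt_matrix_inv _ <| by
      simpa [Ring.inverse_eq_inv'] using
        continuousAt_inv₀ ((isUnit_iff_isUnit_det _).1 (hunit x)).ne_zero).comp hM.continuousAt

lemma HasDerivAt.matrix_transpose {κ : Type*} [Fintype κ] [DecidableEq κ]
    {M : ℝ → Matrix ι κ ℝ} {M' : Matrix ι κ ℝ} {t : ℝ} (hM : HasDerivAt M M' t) :
    HasDerivAt (fun s => (M s)ᵀ) M'ᵀ t :=
  ((transposeLinearEquiv ι κ ℝ ℝ).toContinuousLinearEquiv :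
    Matrix ι κ ℝ →L[ℝ] Matrix κ ι ℝ).hasFDerivAt.comp_hasDerivAt t hM

variable {M : ℝ → Matrix ι ι ℝ} {M' : Matrix ι ι ℝ} {t : ℝ}

lemma HasDerivAt.matrix_inv (hM : HasDerivAt M M' t) (hunit : IsUnit (M t)) :
    HasDerivAt (fun s => (M s)⁻¹) (-((M t)⁻¹ * M' * (M t)⁻¹)) t := by
  have hinv : (↑hunit.unit⁻¹ : Matrix ι ι ℝ) = (M t)⁻¹ := by
    rw [coe_units_inv, hunit.unit_spec]
  have hinverse := hasFDerivAt_ringInverse (𝕜 := ℝ) hunit.unit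
  rw [hunit.unit_spec] at hinverse
  have := hinverse.comp_hasDerivAt t hM
  simpa [Function.comp_def, hinv, ← nonsing_inv_eq_ringInverse] using this

lemma hasDerivAt_riccati_solution {Φ Γ P : ℝ → Matrix ι ι ℝ} {A Q S : Matrix ι ι ℝ}
    (hΦ : HasDerivAt Φ (A * Φ t) t) (hΓ : HasDerivAt Γ ((Φ t)ᵀ * Q * Φ t) t)
    (hunit : IsUnit (1 + S * Γ t * S))
    (hP : ∀ s, P s = Φ s * S * (1 + S * Γ s * S)⁻¹ * S * (Φ s)ᵀ) :
    HasDerivAt P (A * P t + P t * Aᵀ - P t * Q * P t) t := by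
  have hinv := (((hΓ.const_mul S).mul_const S).const_add 1).matrix_inv hunit
  have hprod := (((hΦ.mul_const S).mul hinv).mul_const S).mul hΦ.matrix_transpose
  rw [funext hP]
  refine hprod.congr_deriv ?_
  simp only [Pi.mul_apply, transpose_mul, Matrix.mul_assoc, add_mul, mul_neg, neg_mul,
    sub_eq_add_neg]
  abel

end Calculus

theorem riccati_explicit_solution_general
    {m n : ℕ}
    (A : ℝ → Matrix (Fin m) (Fin m) ℝ)
    (C : ℝ → Matrix (Fin n) (Fin m) ℝ)
    (R : ℝ → Matrix (Fin n) (Fin n) ℝ)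
    (hC : Continuous C) (hR : Continuous R)
    (hRpd : ∀ t, (R t).PosDef)
    (Φ : ℝ → Matrix (Fin m) (Fin m) ℝ)
    (hΦ : ∀ t, HasDerivAt Φ (A t * Φ t) t)
    (hΦ0 : Φ 0 = 1)
    (P : Matrix (Fin m) (Fin m) ℝ)
    (hP : P.PosSemidef)
    (Cbar : ℝ → Matrix (Fin m) (Fin m) ℝ)
    (hCbar : ∀ t, Cbar t = ∫ s in (0:ℝ)..t, (Φ s)ᵀ * (C s)ᵀ * (R s)⁻¹ * C s * Φ s)
    (Pt : ℝ → Matrix (Fin m) (Fin m) ℝ)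
    (hPt : ∀ t, Pt t = Φ t * hP.sqrt * (1 + hP.sqrt * Cbar t * hP.sqrt)⁻¹ * hP.sqrt * (Φ t)ᵀ) :
    Pt 0 = P ∧
      ∀ t > (0:ℝ),
        HasDerivAt Pt
          (A t * Pt t + Pt t * (A t)ᵀ - Pt t * (C t)ᵀ * (R t)⁻¹ * C t * Pt t) t := by
  have hΦc : Continuous Φ := continuous_iff_continuousAt.2 fun t => (hΦ t).continuousAt
  have hG_cont : Continuous fun s => (Φ s)ᵀ * (C s)ᵀ * (R s)⁻¹ * C s * Φ s :=
    (((hΦc.matrix_transpose.matrix_mul hC.matrix_transpose).matrix_mul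
      (hR.matrix_inv fun s => (hRpd s).isUnit)).matrix_mul hC).matrix_mul hΦc
  have hG_pos (s : ℝ) : ((Φ s)ᵀ * (C s)ᵀ * (R s)⁻¹ * C s * Φ s).PosSemidef := by
    simpa [Matrix.mul_assoc] using
      (hRpd s).inv.posSemidef.conjTranspose_mul_mul_same (C s * Φ s)
  have hCbar_deriv (t : ℝ) : HasDerivAt Cbar ((Φ t)ᵀ * ((C t)ᵀ * (R t)⁻¹ * C t) * Φ t) t := by
    rw [funext hCbar]
    simpa only [Matrix.mul_assoc] using (hG_cont.integral_hasStrictDerivAt 0 t).hasDerivAt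
  refine ⟨by simp [hPt 0, hCbar 0, hΦ0, hP.sqrt_mul_self], fun t ht => ?_⟩
  have hCbar_pos : (Cbar t).PosSemidef := by
    rw [hCbar t]
    exact posSemidef_intervalIntegral hG_cont hG_pos ht.le
  have hpos : (hP.sqrt * Cbar t * hP.sqrt).PosSemidef := by
    simpa only [hP.conjTranspose_sqrt] using hCbar_pos.conjTranspose_mul_mul_same hP.sqrt
  simpa only [Matrix.mul_assoc] using
    hasDerivAt_riccati_solution (hΦ t) (hCbar_deriv t) hpos.isUnit_one_add hPt

/-- The explicit formula
`P_t = Φ_t √P (I + √P C̄_t √P)⁻¹ √P Φ_tᵀ` solves the noise-free Riccati equation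
`Ṗ_t = A_t P_t + P_t A_tᵀ - P_t C_tᵀ R_t⁻¹ C_t P_t` with `P_0 = P`. -/
theorem riccati_explicit_solution
    {m n : ℕ}
    (A : ℝ → Matrix (Fin m) (Fin m) ℝ)
    (C : ℝ → Matrix (Fin n) (Fin m) ℝ)
    (R : ℝ → Matrix (Fin n) (Fin n) ℝ)
    (hA : Continuous A) (hC : Continuous C) (hR : Continuous R)
    (hRpd : ∀ t, (R t).PosDef)
    (Φ : ℝ → Matrix (Fin m) (Fin m) ℝ)
    (hΦ : ∀ t, HasDerivAt Φ (A t * Φ t) t)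
    (hΦ0 : Φ 0 = 1)
    (P : Matrix (Fin m) (Fin m) ℝ)
    (hP : P.PosSemidef)
    (Cbar : ℝ → Matrix (Fin m) (Fin m) ℝ)
    (hCbar : ∀ t, Cbar t = ∫ s in (0:ℝ)..t, (Φ s)ᵀ * (C s)ᵀ * (R s)⁻¹ * C s * Φ s)
    (Pt : ℝ → Matrix (Fin m) (Fin m) ℝ)
    (hPt : ∀ t, Pt t = Φ t * hP.sqrt * (1 + hP.sqrt * Cbar t * hP.sqrt)⁻¹ * hP.sqrt * (Φ t)ᵀ) :
    Pt 0 = P ∧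
      ∀ t > (0:ℝ),
        HasDerivAt Pt
          (A t * Pt t + Pt t * (A t)ᵀ - Pt t * (C t)ᵀ * (R t)⁻¹ * C t * Pt t) t :=
  riccati_explicit_solution_general A C R hC hR hRpd Φ hΦ hΦ0 P hP Cbar hCbar Pt hPt
end

section
/- Let $P_t$ be a solution of the noise-free Riccati equation $\dot P_t = A_t P_t + P_t A_t^T - P_t C_t^T R_t^{-1} C_t P_t$ with $P_0 > 0$, such that $P_t$ is invertible for all $t$. Let $z_t$ solve the closed-loop equation $\dot z_t = (A_t - P_t C_t^T R_t^{-1} C_t) z_t$. Then the Lyapunov function $V(z_t, t) := z_t^T P_t^{-1} z_t$ satisfies $\frac{d}{dt} V(z_t, t) = - z_t^T C_t^T R_t^{-1} C_t z_t \leq 0$ for all $t > 0$; in particular $t \mapsto V(z_t,t)$ is nonincreasing. -/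
open Matrix Set
open scoped Matrix.Norms.L2Operator

section Aux

variable {m n : ℕ}

private lemma continuous_matrix_inv' {R : ℝ → Matrix (Fin n) (Fin n) ℝ}
    (hR : Continuous R) (h : ∀ t, IsUnit (R t).det) :
    Continuous fun t => (R t)⁻¹ := by
  have heq : (fun t => (R t)⁻¹) = fun t => Ring.inverse (R t) := by
    funext s; rw [Matrix.nonsing_inv_eq_ringInverse]
  rw [heq, continuous_iff_continuousAt]
  intro t
  obtain ⟨u, hu⟩ := (Matrix.isUnit_iff_isUnit_det _).2 (h t)
  have : ContinuousAt (Ring.inverse (M₀ := Matrix (Fin n) (Fin n) ℝ)) (R t) := by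
    rw [← hu]; exact NormedRing.inverse_continuousAt u
  exact this.comp hR.continuousAt

private lemma hasDerivAt_matrix_inv' {P : ℝ → Matrix (Fin m) (Fin m) ℝ}
    {P' : Matrix (Fin m) (Fin m) ℝ} {t : ℝ}
    (hP : HasDerivAt P P' t) (h : IsUnit (P t).det) :
    HasDerivAt (fun s => (P s)⁻¹) (-((P t)⁻¹ * P' * (P t)⁻¹)) t := by
  obtain ⟨u, hu⟩ := (Matrix.isUnit_iff_isUnit_det _).2 h
  have hF0 : HasFDerivAt (Ring.inverse (M₀ := Matrix (Fin m) (Fin m) ℝ))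
      (-(ContinuousLinearMap.mulLeftRight ℝ _ (↑u⁻¹) ↑u⁻¹)) (P t) := by
    rw [← hu]; exact hasFDerivAt_ringInverse u
  have hF := hF0.comp_hasDerivAt t hP
  simp only [ContinuousLinearMap.neg_apply, ContinuousLinearMap.mulLeftRight_apply] at hF
  simp only [Function.comp_def] at hF
  have heq : (fun s => Ring.inverse (P s)) = fun s => (P s)⁻¹ := by
    funext s; rw [Matrix.nonsing_inv_eq_ringInverse]
  rw [heq] at hF
  have hui : (↑u⁻¹ : Matrix (Fin m) (Fin m) ℝ) = (P t)⁻¹ := by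
    rw [← hu, ← Matrix.coe_units_inv]
  rw [hui] at hF
  exact hF

private lemma hasDerivAt_transpose' {P : ℝ → Matrix (Fin m) (Fin m) ℝ}
    {P' : Matrix (Fin m) (Fin m) ℝ} {t : ℝ} (hP : HasDerivAt P P' t) :
    HasDerivAt (fun s => (P s)ᵀ) P'ᵀ t := by
  let E : Matrix (Fin m) (Fin m) ℝ →ₗ[ℝ] Matrix (Fin m) (Fin m) ℝ :=
    { toFun := fun M => Mᵀ, map_add' := fun _ _ => rfl, map_smul' := fun _ _ => rfl }
  exact E.toContinuousLinearMap.hasFDerivAt.comp_hasDerivAt t hP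

private lemma hasDerivAt_entry' {Q : ℝ → Matrix (Fin m) (Fin m) ℝ}
    {Q' : Matrix (Fin m) (Fin m) ℝ} {t : ℝ} (hQ : HasDerivAt Q Q' t) (i j : Fin m) :
    HasDerivAt (fun s => Q s i j) (Q' i j) t := by
  let E : Matrix (Fin m) (Fin m) ℝ →ₗ[ℝ] ℝ :=
    { toFun := fun M => M i j, map_add' := fun _ _ => rfl, map_smul' := fun _ _ => rfl }
  exact E.toContinuousLinearMap.hasFDerivAt.comp_hasDerivAt t hQ

private lemma hasDerivAt_quadForm' {Q : ℝ → Matrix (Fin m) (Fin m) ℝ} {z : ℝ → Fin m → ℝ}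
    {Q' : Matrix (Fin m) (Fin m) ℝ} {z' : Fin m → ℝ} {t : ℝ}
    (hQ : HasDerivAt Q Q' t) (hz : HasDerivAt z z' t) :
    HasDerivAt (fun s => z s ⬝ᵥ (Q s *ᵥ z s))
      (z' ⬝ᵥ (Q t *ᵥ z t) + z t ⬝ᵥ (Q' *ᵥ z t) + z t ⬝ᵥ (Q t *ᵥ z')) t := by
  have hzi : ∀ i : Fin m, HasDerivAt (fun s => z s i) (z' i) t := fun i =>
    ((ContinuousLinearMap.proj (R := ℝ) (φ := fun _ : Fin m => ℝ) i).hasFDerivAt.comp_hasDerivAt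
      t hz)
  have key : HasDerivAt (fun s => ∑ i, z s i * ∑ j, Q s i j * z s j)
      (∑ i, (z' i * ∑ j, Q t i j * z t j
        + z t i * ∑ j, (Q' i j * z t j + Q t i j * z' j))) t := by
    apply HasDerivAt.fun_sum
    intro i _
    exact (hzi i).mul (HasDerivAt.fun_sum fun j _ => ((hasDerivAt_entry' hQ i j).mul (hzi j)))
  have e1 : (fun s => z s ⬝ᵥ (Q s *ᵥ z s)) = fun s => ∑ i, z s i * ∑ j, Q s i j * z s j := by
    funext s; simp [dotProduct, mulVec]
  rw [e1]
  convert key using 1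
  simp only [dotProduct, mulVec, Finset.sum_add_distrib, mul_add, Finset.mul_sum]
  ring_nf

private lemma dot_shift {k : ℕ} (M : Matrix (Fin k) (Fin m) ℝ) (x : Fin m → ℝ) (y : Fin k → ℝ) :
    (M *ᵥ x) ⬝ᵥ y = x ⬝ᵥ (Mᵀ *ᵥ y) := by
  rw [mulVec_transpose, dotProduct_comm, dotProduct_mulVec, dotProduct_comm]

private lemma P_transpose_eq'
    (A : ℝ → Matrix (Fin m) (Fin m) ℝ)
    (C : ℝ → Matrix (Fin n) (Fin m) ℝ)
    (R : ℝ → Matrix (Fin n) (Fin n) ℝ)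
    (hA : Continuous A) (hC : Continuous C) (hR : Continuous R)
    (hRpd : ∀ t, (R t).PosDef)
    (P : ℝ → Matrix (Fin m) (Fin m) ℝ)
    (hP : ∀ t, HasDerivAt P
      (A t * P t + P t * (A t)ᵀ - P t * (C t)ᵀ * (R t)⁻¹ * C t * P t) t)
    (hP0 : (P 0).PosDef) :
    ∀ t ∈ Set.Ici (0:ℝ), (P t)ᵀ = P t := by
  have hRt : ∀ s, (R s)ᵀ = R s := by
    intro s
    rw [← Matrix.conjTranspose_eq_transpose_of_trivial]; exact (hRpd s).1
  have hRinv : Continuous fun t => (R t)⁻¹ :=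
    continuous_matrix_inv' hR fun t => (hRpd t).det_pos.ne'.isUnit
  have hPc : Continuous P := continuous_iff_continuousAt.mpr fun t => (hP t).continuousAt
  set S : ℝ → Matrix (Fin m) (Fin m) ℝ := fun s => (C s)ᵀ * (R s)⁻¹ * C s with hS
  have hScont : Continuous S := (hC.matrix_transpose.matrix_mul hRinv).matrix_mul hC
  set L : ℝ → Matrix (Fin m) (Fin m) ℝ := fun s => A s - (P s)ᵀ * S s with hL
  set N : ℝ → Matrix (Fin m) (Fin m) ℝ := fun s => (A s)ᵀ - S s * P s with hN
  have hLc : Continuous L := hA.sub (hPc.matrix_transpose.matrix_mul hScont)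
  have hNc : Continuous N := hA.matrix_transpose.sub (hScont.matrix_mul hPc)
  set D : ℝ → Matrix (Fin m) (Fin m) ℝ := fun s => P s - (P s)ᵀ with hD
  have hD0 : D 0 = 0 := by
    have h0 : (P 0)ᵀ = P 0 := by
      rw [← Matrix.conjTranspose_eq_transpose_of_trivial]; exact hP0.1
    simp [hD, h0]
  have hDc : Continuous D := hPc.sub hPc.matrix_transpose
  have hD' : ∀ s, HasDerivAt D (L s * D s + D s * N s) s := by
    intro s
    have h1 := (hP s).sub (hasDerivAt_transpose' (hP s))
    refine h1.congr_deriv ?_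
    simp only [hL, hN, hD, hS, transpose_add, transpose_sub, transpose_mul,
      transpose_transpose, Matrix.transpose_nonsing_inv, hRt s, Matrix.sub_mul,
      Matrix.mul_sub, Matrix.mul_assoc]
    abel
  intro b hb
  set proj : ℝ → ℝ := fun s => max 0 (min s b) with hproj
  have hprojmem : ∀ s, proj s ∈ Icc 0 b := fun s =>
    ⟨le_max_left _ _, max_le hb (min_le_right _ _)⟩
  have hprojeq : ∀ s ∈ Ico (0:ℝ) b, proj s = s := fun s hs => by
    rw [hproj]; simp [min_eq_left hs.2.le, max_eq_right hs.1]
  obtain ⟨K1, hK1⟩ := (isCompact_Icc (a := (0:ℝ)) (b := b)).exists_bound_of_continuousOn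
    hLc.continuousOn
  obtain ⟨K2, hK2⟩ := (isCompact_Icc (a := (0:ℝ)) (b := b)).exists_bound_of_continuousOn
    hNc.continuousOn
  set v : ℝ → Matrix (Fin m) (Fin m) ℝ → Matrix (Fin m) (Fin m) ℝ :=
    fun s X => L (proj s) * X + X * N (proj s) with hv
  have hvlip : ∀ s, LipschitzWith (K1 + K2).toNNReal (v s) := by
    intro s
    apply LipschitzWith.of_dist_le_mul
    intro X Y
    have e : v s X - v s Y = L (proj s) * (X - Y) + (X - Y) * N (proj s) := by
      rw [hv]; noncomm_ring
    rw [dist_eq_norm, dist_eq_norm, e]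
    calc ‖L (proj s) * (X - Y) + (X - Y) * N (proj s)‖
        ≤ ‖L (proj s) * (X - Y)‖ + ‖(X - Y) * N (proj s)‖ := norm_add_le _ _
      _ ≤ ‖L (proj s)‖ * ‖X - Y‖ + ‖X - Y‖ * ‖N (proj s)‖ :=
          add_le_add (norm_mul_le _ _) (norm_mul_le _ _)
      _ ≤ K1 * ‖X - Y‖ + ‖X - Y‖ * K2 := by
          gcongr
          · exact hK1 _ (hprojmem s)
          · exact hK2 _ (hprojmem s)
      _ = (K1 + K2) * ‖X - Y‖ := by ring
      _ ≤ ((K1 + K2).toNNReal : ℝ) * ‖X - Y‖ := by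
          apply mul_le_mul_of_nonneg_right _ (norm_nonneg _)
          rw [Real.coe_toNNReal']; exact le_max_left _ _
  have huniq := ODE_solution_unique (v := v) (f := D) (g := fun _ => 0) (a := 0) (b := b)
    hvlip hDc.continuousOn
    (fun s hs => by
      have := (hD' s).hasDerivWithinAt (s := Ici s)
      rwa [show v s (D s) = L s * D s + D s * N s by rw [hv]; simp [hprojeq s hs]])
    continuousOn_const
    (fun s hs => by
      simpa [hv] using (hasDerivAt_const s (0 : Matrix (Fin m) (Fin m) ℝ)).hasDerivWithinAt)
    (by simpa using hD0)
  have hb' := huniq (right_mem_Icc.mpr hb)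
  have hfin : P b - (P b)ᵀ = 0 := by simpa [hD] using hb'
  exact (sub_eq_zero.mp hfin).symm

end Aux

/-- Along solutions of the closed-loop equation
`ż = (A_t - P_t C_tᵀ R_t⁻¹ C_t) z`, where `P_t` solves the noise-free Riccati equation
and is invertible, the Lyapunov function `V(z_t,t) = z_tᵀ P_t⁻¹ z_t` satisfies
`d/dt V(z_t,t) = - z_tᵀ C_tᵀ R_t⁻¹ C_t z_t ≤ 0`; in particular `t ↦ V(z_t,t)` is
nonincreasing on `[0,∞)`. -/
theorem lyapunov_derivative_nonpositive
    {m n : ℕ}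
    (A : ℝ → Matrix (Fin m) (Fin m) ℝ)
    (C : ℝ → Matrix (Fin n) (Fin m) ℝ)
    (R : ℝ → Matrix (Fin n) (Fin n) ℝ)
    (hA : Continuous A) (hC : Continuous C) (hR : Continuous R)
    (hRpd : ∀ t, (R t).PosDef)
    (P : ℝ → Matrix (Fin m) (Fin m) ℝ)
    (hP : ∀ t, HasDerivAt P
      (A t * P t + P t * (A t)ᵀ - P t * (C t)ᵀ * (R t)⁻¹ * C t * P t) t)
    (hP0 : (P 0).PosDef)
    (hPinv : ∀ t, IsUnit (P t).det)
    (z : ℝ → Fin m → ℝ)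
    (hz : ∀ t, HasDerivAt z ((A t - P t * (C t)ᵀ * (R t)⁻¹ * C t) *ᵥ z t) t)
    (V : ℝ → ℝ)
    (hV : ∀ t, V t = z t ⬝ᵥ ((P t)⁻¹ *ᵥ z t)) :
    (∀ t > (0:ℝ),
        HasDerivAt V (-(z t ⬝ᵥ (((C t)ᵀ * (R t)⁻¹ * C t) *ᵥ z t))) t ∧
        -(z t ⬝ᵥ (((C t)ᵀ * (R t)⁻¹ * C t) *ᵥ z t)) ≤ 0) ∧
      AntitoneOn V (Set.Ici 0) := by
  have hRt : ∀ s, (R s)ᵀ = R s := by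
    intro s
    rw [← Matrix.conjTranspose_eq_transpose_of_trivial]; exact (hRpd s).1
  have hPsym := P_transpose_eq' A C R hA hC hR hRpd P hP hP0
  have hVfun : V = fun s => z s ⬝ᵥ ((P s)⁻¹ *ᵥ z s) := funext hV
  -- nonnegativity of the quadratic form
  have hnonneg : ∀ t, 0 ≤ z t ⬝ᵥ (((C t)ᵀ * (R t)⁻¹ * C t) *ᵥ z t) := by
    intro t
    have h := ((hRpd t).inv).posSemidef.dotProduct_mulVec_nonneg (C t *ᵥ z t)
    have e : z t ⬝ᵥ (((C t)ᵀ * (R t)⁻¹ * C t) *ᵥ z t)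
        = (C t *ᵥ z t) ⬝ᵥ ((R t)⁻¹ *ᵥ (C t *ᵥ z t)) := by
      rw [dot_shift, ← mulVec_mulVec, ← mulVec_mulVec]
    rw [e]
    simpa using h
  -- the derivative of V at every t ≥ 0
  have hderiv : ∀ t, 0 ≤ t →
      HasDerivAt V (-(z t ⬝ᵥ (((C t)ᵀ * (R t)⁻¹ * C t) *ᵥ z t))) t := by
    intro t ht
    have hPs : (P t)ᵀ = P t := hPsym t ht
    have hQd := hasDerivAt_matrix_inv' (hP t) (hPinv t)
    have hDV := hasDerivAt_quadForm' hQd (hz t)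
    rw [hVfun]
    convert hDV using 1
    set Q := (P t)⁻¹ with hQdef
    set M := A t - P t * (C t)ᵀ * (R t)⁻¹ * C t with hM
    set Pd := A t * P t + P t * (A t)ᵀ - P t * (C t)ᵀ * (R t)⁻¹ * C t * P t with hPd
    have hQP : Q * P t = 1 := Matrix.nonsing_inv_mul _ (hPinv t)
    have hPQ : P t * Q = 1 := Matrix.mul_nonsing_inv _ (hPinv t)
    have h1 : ∀ X : Matrix (Fin m) (Fin m) ℝ, Q * (P t * X) = X := fun X => by
      rw [← Matrix.mul_assoc, hQP, Matrix.one_mul]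
    have h2 : ∀ X : Matrix (Fin m) (Fin m) ℝ, P t * (Q * X) = X := fun X => by
      rw [← Matrix.mul_assoc, hPQ, Matrix.one_mul]
    have hmat : Mᵀ * Q + (-(Q * Pd * Q)) + Q * M = -((C t)ᵀ * (R t)⁻¹ * C t) := by
      simp only [hM, hPd, transpose_sub, transpose_add, transpose_mul, transpose_transpose,
        Matrix.transpose_nonsing_inv, hRt t, hPs, Matrix.sub_mul, Matrix.mul_sub,
        Matrix.add_mul, Matrix.mul_add, Matrix.neg_mul, Matrix.mul_neg,
        Matrix.mul_assoc, h1, h2, hQP, hPQ, Matrix.mul_one, Matrix.one_mul]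
      abel
    calc -(z t ⬝ᵥ (((C t)ᵀ * (R t)⁻¹ * C t) *ᵥ z t))
        = z t ⬝ᵥ ((-((C t)ᵀ * (R t)⁻¹ * C t)) *ᵥ z t) := by
          rw [neg_mulVec, dotProduct_neg]
      _ = z t ⬝ᵥ ((Mᵀ * Q + (-(Q * Pd * Q)) + Q * M) *ᵥ z t) := by rw [hmat]
      _ = (M *ᵥ z t) ⬝ᵥ (Q *ᵥ z t) + z t ⬝ᵥ ((-(Q * Pd * Q)) *ᵥ z t)
            + z t ⬝ᵥ (Q *ᵥ (M *ᵥ z t)) := by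
          rw [add_mulVec, add_mulVec, dotProduct_add, dotProduct_add, dot_shift,
            mulVec_mulVec, mulVec_mulVec]
  -- conclusion
  constructor
  · intro t ht
    exact ⟨hderiv t ht.le, neg_nonpos.mpr (hnonneg t)⟩
  · apply antitoneOn_of_deriv_nonpos (convex_Ici 0)
    · exact fun t ht => (hderiv t ht).continuousAt.continuousWithinAt
    · intro t ht
      rw [interior_Ici] at ht
      exact (hderiv t (le_of_lt ht)).differentiableAt.differentiableWithinAt
    · intro t ht
      rw [interior_Ici] at ht
      rw [(hderiv t (le_of_lt ht)).deriv]
      exact neg_nonpos.mpr (hnonneg t)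
end

section
/- Let $P_t^P$ and $P_t^{\bar P}$ be two solutions of the noise-free Riccati equation with symmetric positive semi-definite initial conditions $P, \bar P$, and let $\Psi_t^{P}, \Psi_t^{\bar P}$ be the fundamental matrices of the respective closed-loop systems. If $\|\Psi_t^{P}\| \to 0$ and $\|\Psi_t^{\bar P}\| \to 0$ as $t \to \infty$, then $\|P_t^P - P_t^{\bar P}\| \to 0$ as $t \to \infty$, i.e., the noise-free Riccati equation is asymptotically stable with respect to its initial condition. -/
open Matrix Filter Set
open scoped Matrix.Norms.L2Operator

private lemma riccati_aux_norm_transpose {k : ℕ} (A : Matrix (Fin k) (Fin k) ℝ) :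
    ‖Aᵀ‖ = ‖A‖ := by
  rw [← Matrix.l2_opNorm_conjTranspose A]; rfl

private lemma riccati_aux_hasDerivAt_transpose {k : ℕ} {f : ℝ → Matrix (Fin k) (Fin k) ℝ}
    {f' : Matrix (Fin k) (Fin k) ℝ} {t : ℝ} (hf : HasDerivAt f f' t) :
    HasDerivAt (fun s => (f s)ᵀ) f'ᵀ t := by
  have hnorm : ∀ A : Matrix (Fin k) (Fin k) ℝ, ‖Aᵀ‖ ≤ (1:ℝ) * ‖A‖ := fun A => by
    rw [one_mul, riccati_aux_norm_transpose]
  let e : Matrix (Fin k) (Fin k) ℝ →L[ℝ] Matrix (Fin k) (Fin k) ℝ :=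
    LinearMap.mkContinuous
      { toFun := fun A => Aᵀ
        map_add' := fun A B => Matrix.transpose_add A B
        map_smul' := fun c A => Matrix.transpose_smul c A } 1 hnorm
  exact e.hasFDerivAt.comp_hasDerivAt t hf

private lemma riccati_aux_linear_ode_zero {k : ℕ} {L M D : ℝ → Matrix (Fin k) (Fin k) ℝ}
    (hL : Continuous L) (hM : Continuous M) (hDc : Continuous D)
    (hD : ∀ s, 0 ≤ s → HasDerivAt D (L s * D s + D s * M s) s)
    (hD0 : D 0 = 0) : ∀ t, 0 ≤ t → D t = 0 := by
  intro t ht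
  obtain ⟨K, hK⟩ := (isCompact_Icc (a := (0:ℝ)) (b := t)).exists_bound_of_continuousOn
    ((hL.norm.add hM.norm).continuousOn)
  have key := norm_le_gronwallBound_of_norm_deriv_right_le (δ := 0) (K := K) (ε := 0)
    (a := 0) (b := t) (f := D) (f' := fun s => L s * D s + D s * M s)
    (hDc.continuousOn)
    (fun x hx => ((hD x hx.1).hasDerivWithinAt))
    (by simp [hD0])
    (fun x hx => by
      have h1 : ‖L x * D x + D x * M x‖ ≤ ‖L x‖ * ‖D x‖ + ‖D x‖ * ‖M x‖ :=
        (norm_add_le _ _).trans (add_le_add (norm_mul_le _ _) (norm_mul_le _ _))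
      have h2 : ‖L x‖ + ‖M x‖ ≤ K := (le_abs_self _).trans (hK x ⟨hx.1, hx.2.le⟩)
      have h3 : (0:ℝ) ≤ ‖D x‖ := norm_nonneg _
      nlinarith [norm_nonneg (L x), norm_nonneg (M x)])
  have := key t ⟨ht, le_refl t⟩
  rw [sub_zero, gronwallBound_ε0_δ0] at this
  exact norm_le_zero_iff.mp this

/-- Asymptotic stability of the noise-free Riccati equation with
respect to its initial condition: if the fundamental matrices of the two closed-loop
systems tend to zero in norm, then `‖P^P_t - P^P̄_t‖ → 0` as `t → ∞`. -/
theorem riccati_asymptotic_stability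
    {m n : ℕ}
    (A : ℝ → Matrix (Fin m) (Fin m) ℝ)
    (C : ℝ → Matrix (Fin n) (Fin m) ℝ)
    (R : ℝ → Matrix (Fin n) (Fin n) ℝ)
    (hA : Continuous A) (hC : Continuous C) (hR : Continuous R)
    (hRpd : ∀ t, (R t).PosDef)
    (P Pbar : Matrix (Fin m) (Fin m) ℝ)
    (hP : P.PosSemidef) (hPbar : Pbar.PosSemidef)
    (PP PPbar : ℝ → Matrix (Fin m) (Fin m) ℝ)
    (hPP : ∀ t, HasDerivAt PP
      (A t * PP t + PP t * (A t)ᵀ - PP t * (C t)ᵀ * (R t)⁻¹ * C t * PP t) t)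
    (hPP0 : PP 0 = P)
    (hPPbar : ∀ t, HasDerivAt PPbar
      (A t * PPbar t + PPbar t * (A t)ᵀ - PPbar t * (C t)ᵀ * (R t)⁻¹ * C t * PPbar t) t)
    (hPPbar0 : PPbar 0 = Pbar)
    (Ψ Ψbar : ℝ → Matrix (Fin m) (Fin m) ℝ)
    (hΨ : ∀ t, HasDerivAt Ψ ((A t - PP t * (C t)ᵀ * (R t)⁻¹ * C t) * Ψ t) t)
    (hΨ0 : Ψ 0 = 1)
    (hΨbar : ∀ t, HasDerivAt Ψbar ((A t - PPbar t * (C t)ᵀ * (R t)⁻¹ * C t) * Ψbar t) t)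
    (hΨbar0 : Ψbar 0 = 1)
    (hΨto0 : Tendsto (fun t => ‖Ψ t‖) atTop (nhds 0))
    (hΨbarto0 : Tendsto (fun t => ‖Ψbar t‖) atTop (nhds 0)) :
    Tendsto (fun t => ‖PP t - PPbar t‖) atTop (nhds 0) := by
  -- abbreviation
  set S : ℝ → Matrix (Fin m) (Fin m) ℝ := fun t => (C t)ᵀ * (R t)⁻¹ * C t with hSdef
  have hRT : ∀ t, ((R t)⁻¹)ᵀ = (R t)⁻¹ := by
    intro t
    rw [Matrix.transpose_nonsing_inv]
    congr 1
    exact Matrix.IsSymm.eq (by simpa using (hRpd t).isHermitian)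
  have hSsymm : ∀ t, (S t)ᵀ = S t := by
    intro t
    simp only [hSdef, Matrix.transpose_mul, Matrix.transpose_transpose, hRT, Matrix.mul_assoc]
  have hRinvC : Continuous (fun t => (R t)⁻¹) := by
    have h : ∀ t, (R t)⁻¹ = ((R t).det)⁻¹ • (R t).adjugate := fun t => by
      rw [Matrix.inv_def, Ring.inverse_eq_inv']
    simp only [h]
    exact (hR.matrix_det.inv₀ fun t => (hRpd t).det_pos.ne').smul hR.matrix_adjugate
  have hSc : Continuous S := (hC.matrix_transpose.matrix_mul hRinvC).matrix_mul hC
  have hPPc : Continuous PP := continuous_iff_continuousAt.mpr fun s => (hPP s).continuousAt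
  have hPPbarc : Continuous PPbar :=
    continuous_iff_continuousAt.mpr fun s => (hPPbar s).continuousAt
  have hΨc : Continuous Ψ := continuous_iff_continuousAt.mpr fun s => (hΨ s).continuousAt
  have hΨbarc : Continuous Ψbar :=
    continuous_iff_continuousAt.mpr fun s => (hΨbar s).continuousAt
  -- Step 1: symmetry of PPbar on [0, ∞)
  have hsymm : ∀ s, 0 ≤ s → (PPbar s)ᵀ = PPbar s := by
    have hz := riccati_aux_linear_ode_zero
      (L := fun s => A s - PPbar s * S s)
      (M := fun s => (A s)ᵀ - S s * (PPbar s)ᵀ)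
      (D := fun s => PPbar s - (PPbar s)ᵀ)
      (hA.sub (hPPbarc.mul hSc))
      (hA.matrix_transpose.sub (hSc.mul hPPbarc.matrix_transpose))
      (hPPbarc.sub hPPbarc.matrix_transpose)
      (fun s _ => by
        have h1 := hPPbar s
        have h2 := riccati_aux_hasDerivAt_transpose h1
        have h3 := h1.sub h2
        convert h3 using 1
        any_goals rfl
        simp only [Matrix.transpose_add, Matrix.transpose_sub, Matrix.transpose_mul,
          Matrix.transpose_transpose, hRT, hSdef, Matrix.sub_mul, Matrix.mul_sub,
          Matrix.add_mul, Matrix.mul_add, Matrix.mul_assoc]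
        abel)
      (by simp only [hPPbar0]; rw [show Pbarᵀ = Pbar from Matrix.IsSymm.eq (by simpa using hPbar.isHermitian), sub_self])
    intro s hs
    have := hz s hs
    rw [sub_eq_zero] at this
    exact this.symm
  -- Step 2: the key identity on [0, ∞)
  have hkey : ∀ s, 0 ≤ s → PP s - PPbar s = Ψ s * (P - Pbar) * (Ψbar s)ᵀ := by
    have hz := riccati_aux_linear_ode_zero
      (L := fun s => A s - PP s * S s)
      (M := fun s => (A s)ᵀ - S s * PPbar s)
      (D := fun s => (PP s - PPbar s) - Ψ s * (P - Pbar) * (Ψbar s)ᵀ)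
      (hA.sub (hPPc.mul hSc))
      (hA.matrix_transpose.sub (hSc.mul hPPbarc))
      (((hPPc.sub hPPbarc).sub (((hΨc.mul continuous_const)).mul hΨbarc.matrix_transpose)))
      (fun s hs => by
        have h1 := (hPP s).sub (hPPbar s)
        have hΦ := riccati_aux_hasDerivAt_transpose (hΨbar s)
        have hE := ((hΨ s).mul_const (P - Pbar)).mul hΦ
        have h3 := h1.sub hE
        convert h3 using 1
        any_goals rfl
        have hQ : (PPbar s)ᵀ = PPbar s := hsymm s hs
        simp only [Matrix.transpose_mul, Matrix.transpose_sub, Matrix.transpose_transpose,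
          hRT, hQ, hSdef, Matrix.sub_mul, Matrix.mul_sub, Matrix.add_mul, Matrix.mul_add,
          Matrix.mul_assoc]
        abel)
      (by simp [hPP0, hPPbar0, hΨ0, hΨbar0])
    intro s hs
    have := hz s hs
    rwa [sub_eq_zero] at this
  -- Step 3: conclude
  have hbound : ∀ᶠ t in atTop, ‖PP t - PPbar t‖ ≤ ‖Ψ t‖ * ‖P - Pbar‖ * ‖Ψbar t‖ := by
    filter_upwards [eventually_ge_atTop (0:ℝ)] with t ht
    rw [hkey t ht]
    calc ‖Ψ t * (P - Pbar) * (Ψbar t)ᵀ‖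
        ≤ ‖Ψ t * (P - Pbar)‖ * ‖(Ψbar t)ᵀ‖ := norm_mul_le _ _
      _ ≤ ‖Ψ t‖ * ‖P - Pbar‖ * ‖(Ψbar t)ᵀ‖ :=
          mul_le_mul_of_nonneg_right (norm_mul_le _ _) (norm_nonneg _)
      _ = ‖Ψ t‖ * ‖P - Pbar‖ * ‖Ψbar t‖ := by rw [riccati_aux_norm_transpose]
  have hlim : Tendsto (fun t => ‖Ψ t‖ * ‖P - Pbar‖ * ‖Ψbar t‖) atTop (nhds 0) := by
    have := (hΨto0.mul_const ‖P - Pbar‖).mul hΨbarto0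
    simpa using this
  exact squeeze_zero' (by filter_upwards with t using norm_nonneg _) hbound hlim
end
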